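/- Let σ > 0, σ0 > 0, τ0 > 0 and N a positive integer, and let z = 0 (no testing correction). Define R(β) = E_{τ ~ N(τ0, σ0²)}[τ · Φ((Nτ + τ0β)/(2√N σ))]. Then R is strictly increasing on [0, 4σ²/σ0²) and strictly decreasing on (4σ²/σ0², ∞); in particular the Bayes-optimal shrinkage β_bayes = 4σ²/σ0² maximizes R when z = 0, and for z > 0 the maximizer strictly exceeds β_bayes. -/

import Mathlib

/-!
Write the argument of `Φ` as `aτ + c`. Differentiating under the integral,
`d/dc E[τ Φ(aτ + c)] = E[τ φ(aτ + c)]`, and completing the square shows that the prior density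
times `φ(aτ + c)` is a positive multiple of a Gaussian density with mean
`(μ - a c v) / (1 + a² v)`. So the derivative has the sign of `μ - a c v`: the reward is unimodal
in `c` with its peak at `c = μ / (a v)`, which for `z = 0` is `β = 4σ²/σ0²`. A testing correction
`z > 0` lowers `c` by `z`, which moves the peak to a strictly larger `β`.
-/

open Real MeasureTheory

/-- Standard normal CDF. -/
noncomputable def Phi (x : ℝ) : ℝ :=
  ∫ t in Set.Iic x, (Real.sqrt (2 * Real.pi))⁻¹ * Real.exp (-t ^ 2 / 2)

/-- Density of a normal distribution with mean `μ` and variance `v`. -/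
noncomputable def gpdf (μ v x : ℝ) : ℝ :=
  (Real.sqrt (2 * Real.pi * v))⁻¹ * Real.exp (-(x - μ) ^ 2 / (2 * v))

open ProbabilityTheory Set

lemma gpdf_eq_gaussianPDFReal {v : ℝ} (hv : 0 ≤ v) (μ : ℝ) :
    gpdf μ v = gaussianPDFReal μ v.toNNReal := by
  rw [gaussianPDFReal_def, Real.coe_toNNReal _ hv]
  rfl

@[fun_prop]
lemma continuous_gpdf (μ v : ℝ) : Continuous (gpdf μ v) := by
  unfold gpdf; fun_prop

lemma gpdf_nonneg {v : ℝ} (hv : 0 ≤ v) (μ x : ℝ) : 0 ≤ gpdf μ v x := by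
  rw [gpdf_eq_gaussianPDFReal hv]; exact gaussianPDFReal_nonneg _ _ _

lemma gpdf_pos {v : ℝ} (hv : 0 < v) (μ x : ℝ) : 0 < gpdf μ v x := by
  rw [gpdf_eq_gaussianPDFReal hv.le]; exact gaussianPDFReal_pos _ _ _ (by simpa using hv)

lemma gpdf_le {v : ℝ} (hv : 0 ≤ v) (μ x : ℝ) : gpdf μ v x ≤ (√(2 * π * v))⁻¹ :=
  mul_le_of_le_one_right (by positivity) (exp_le_one_iff.2 (by
    rw [neg_div]; exact neg_nonpos.2 (div_nonneg (sq_nonneg _) (by positivity))))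

lemma integrable_gpdf {v : ℝ} (hv : 0 ≤ v) (μ : ℝ) : Integrable (gpdf μ v) := by
  rw [gpdf_eq_gaussianPDFReal hv]; exact integrable_gaussianPDFReal _ _

lemma integral_gpdf {v : ℝ} (hv : 0 < v) (μ : ℝ) : ∫ x, gpdf μ v x = 1 := by
  rw [gpdf_eq_gaussianPDFReal hv.le]; exact integral_gaussianPDFReal_eq_one _ (by simpa using hv)

lemma integrable_gpdf_mul_id {v : ℝ} (hv : 0 < v) (μ : ℝ) :
    Integrable (fun x => gpdf μ v x * x) := by
  have hv' : v.toNNReal ≠ 0 := by simpa using hv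
  have h := (memLp_id_gaussianReal (μ := μ) (v := v.toNNReal) 1).integrable le_rfl
  rw [gaussianReal_of_var_ne_zero _ hv', integrable_withDensity_iff_integrable_smul'
    (measurable_gaussianPDF _ _) (ae_of_all _ fun _ => gaussianPDF_lt_top)] at h
  simpa [toReal_gaussianPDF, gpdf_eq_gaussianPDFReal hv.le] using h

lemma integral_gpdf_mul_id {v : ℝ} (hv : 0 < v) (μ : ℝ) : ∫ x, gpdf μ v x * x = μ := by
  have hv' : v.toNNReal ≠ 0 := by simpa using hv
  have h := integral_id_gaussianReal (μ := μ) (v := v.toNNReal)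
  rw [integral_gaussianReal_eq_integral_smul hv'] at h
  rw [gpdf_eq_gaussianPDFReal hv.le]
  exact h

lemma gpdf_mul_gpdf_affine {v : ℝ} (hv : 0 < v) (μ a c x : ℝ) :
    gpdf μ v x * gpdf 0 1 (a * x + c) =
      gpdf 0 (1 + a ^ 2 * v) (a * μ + c) *
        gpdf ((μ - a * c * v) / (1 + a ^ 2 * v)) (v / (1 + a ^ 2 * v)) x := by
  have hd : 0 < 1 + a ^ 2 * v := by positivity
  have hnorm : (√(2 * π * v))⁻¹ * (√(2 * π * 1))⁻¹ =
      (√(2 * π * (1 + a ^ 2 * v)))⁻¹ * (√(2 * π * (v / (1 + a ^ 2 * v))))⁻¹ := by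
    rw [← mul_inv, ← mul_inv, ← sqrt_mul (by positivity), ← sqrt_mul (by positivity)]
    congr 2
    field_simp
  have hexp : -(x - μ) ^ 2 / (2 * v) + -(a * x + c - 0) ^ 2 / (2 * 1) =
      -(a * μ + c - 0) ^ 2 / (2 * (1 + a ^ 2 * v)) +
        -(x - (μ - a * c * v) / (1 + a ^ 2 * v)) ^ 2 / (2 * (v / (1 + a ^ 2 * v))) := by
    field_simp
    ring
  unfold gpdf
  calc _ = (√(2 * π * v))⁻¹ * (√(2 * π * 1))⁻¹ *
        exp (-(x - μ) ^ 2 / (2 * v) + -(a * x + c - 0) ^ 2 / (2 * 1)) := by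
          rw [exp_add]; ring
    _ = _ := by rw [hnorm, hexp, exp_add]; ring

lemma hasDerivAt_setIntegral_Iic {f : ℝ → ℝ} (hf : Continuous f) (hfi : Integrable f) (x : ℝ) :
    HasDerivAt (fun u => ∫ t in Iic u, f t) (f x) x := by
  have hsplit : (fun u => ∫ t in Iic u, f t) = fun u => (∫ t in Iic 0, f t) + ∫ t in 0..u, f t := by
    funext u
    rw [← intervalIntegral.integral_Iic_sub_Iic hfi.integrableOn hfi.integrableOn]
    ring
  rw [hsplit]
  exact (intervalIntegral.integral_hasDerivAt_right (hf.intervalIntegrable 0 x)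
    (hf.stronglyMeasurableAtFilter _ _) hf.continuousAt).const_add _

lemma Phi_eq_setIntegral_gpdf (x : ℝ) : Phi x = ∫ t in Iic x, gpdf 0 1 t := by
  simp [Phi, gpdf]

lemma Phi_nonneg (x : ℝ) : 0 ≤ Phi x := by
  rw [Phi_eq_setIntegral_gpdf]
  exact setIntegral_nonneg measurableSet_Iic fun t _ => gpdf_nonneg zero_le_one 0 t

lemma Phi_le_one (x : ℝ) : Phi x ≤ 1 := by
  rw [Phi_eq_setIntegral_gpdf]
  exact (setIntegral_le_integral (integrable_gpdf zero_le_one 0)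
    (ae_of_all _ (gpdf_nonneg zero_le_one 0))).trans_eq (integral_gpdf one_pos 0)

lemma hasDerivAt_Phi (x : ℝ) : HasDerivAt Phi (gpdf 0 1 x) x := by
  rw [funext Phi_eq_setIntegral_gpdf]
  exact hasDerivAt_setIntegral_Iic (continuous_gpdf 0 1) (integrable_gpdf zero_le_one 0) x

@[fun_prop]
lemma continuous_Phi : Continuous Phi :=
  continuous_iff_continuousAt.2 fun x => (hasDerivAt_Phi x).continuousAt

lemma hasDerivAt_integral_mul_Phi {g : ℝ → ℝ} (hg : Integrable (fun x => g x * x)) (a c : ℝ) :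
    HasDerivAt (fun c => ∫ x, g x * (x * Phi (a * x + c)))
      (∫ x, g x * (x * gpdf 0 1 (a * x + c))) c := by
  have hmeas : ∀ f : ℝ → ℝ, Continuous f → AEStronglyMeasurable (fun x => g x * (x * f x)) := by
    intro f hf
    exact (hg.aestronglyMeasurable.mul hf.aestronglyMeasurable).congr
      (ae_of_all _ fun x => mul_assoc _ _ _)
  have hint : Integrable (fun x => g x * (x * Phi (a * x + c))) := by
    refine hg.norm.mono' (hmeas _ (by fun_prop)) (ae_of_all _ fun x => ?_)
    rw [← mul_assoc, norm_mul, Real.norm_eq_abs (Phi _), abs_of_nonneg (Phi_nonneg _)]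
    exact mul_le_of_le_one_right (norm_nonneg _) (Phi_le_one _)
  refine (hasDerivAt_integral_of_dominated_loc_of_deriv_le (x₀ := c)
    (F' := fun c x => g x * (x * gpdf 0 1 (a * x + c)))
    (bound := fun x => ‖g x * x‖ * (√(2 * π * 1))⁻¹)
    Filter.univ_mem (.of_forall fun c' => hmeas (fun x => Phi (a * x + c')) (by fun_prop)) hint
    (hmeas (fun x => gpdf 0 1 (a * x + c)) (by fun_prop)) ?_
    (hg.norm.mul_const _) ?_).2
  · refine ae_of_all _ fun x c' _ => ?_
    rw [← mul_assoc, norm_mul, Real.norm_eq_abs (gpdf _ _ _),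
      abs_of_nonneg (gpdf_nonneg zero_le_one _ _)]
    exact mul_le_mul_of_nonneg_left (gpdf_le zero_le_one _ _) (norm_nonneg _)
  · refine ae_of_all _ fun x c' _ => ?_
    have h := (hasDerivAt_Phi (a * x + c')).comp c' ((hasDerivAt_id c').const_add (a * x))
    simpa using (h.const_mul x).const_mul (g x)

noncomputable def gaussianReward (μ v a c : ℝ) : ℝ :=
  ∫ τ, gpdf μ v τ * (τ * Phi (a * τ + c))

lemma hasDerivAt_gaussianReward {v : ℝ} (hv : 0 < v) (μ a c : ℝ) :
    HasDerivAt (gaussianReward μ v a)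
      (gpdf 0 (1 + a ^ 2 * v) (a * μ + c) * ((μ - a * c * v) / (1 + a ^ 2 * v))) c := by
  have hderiv : ∫ x, gpdf μ v x * (x * gpdf 0 1 (a * x + c)) =
      gpdf 0 (1 + a ^ 2 * v) (a * μ + c) * ((μ - a * c * v) / (1 + a ^ 2 * v)) := calc
    _ = ∫ x, gpdf 0 (1 + a ^ 2 * v) (a * μ + c) *
        (gpdf ((μ - a * c * v) / (1 + a ^ 2 * v)) (v / (1 + a ^ 2 * v)) x * x) := by
          congr 1 with x
          rw [mul_left_comm _ x, gpdf_mul_gpdf_affine hv]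
          ring
    _ = _ := by rw [integral_const_mul, integral_gpdf_mul_id (by positivity)]
  exact hderiv ▸ hasDerivAt_integral_mul_Phi (integrable_gpdf_mul_id hv μ) a c

lemma strictMonoOn_gaussianReward {v a : ℝ} (hv : 0 < v) (ha : 0 < a) (μ : ℝ) :
    StrictMonoOn (gaussianReward μ v a) (Iic (μ / (a * v))) := by
  refine strictMonoOn_of_deriv_pos (convex_Iic _)
    (fun c _ => (hasDerivAt_gaussianReward hv μ a c).continuousAt.continuousWithinAt)
    fun c hc => ?_
  rw [interior_Iic, mem_Iio, lt_div_iff₀ (by positivity)] at hc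
  rw [(hasDerivAt_gaussianReward hv μ a c).deriv]
  exact mul_pos (gpdf_pos (by positivity) _ _) (div_pos (by linarith) (by positivity))

lemma strictAntiOn_gaussianReward {v a : ℝ} (hv : 0 < v) (ha : 0 < a) (μ : ℝ) :
    StrictAntiOn (gaussianReward μ v a) (Ici (μ / (a * v))) := by
  refine strictAntiOn_of_deriv_neg (convex_Ici _)
    (fun c _ => (hasDerivAt_gaussianReward hv μ a c).continuousAt.continuousWithinAt)
    fun c hc => ?_
  rw [interior_Ici, mem_Ioi, div_lt_iff₀ (by positivity)] at hc
  rw [(hasDerivAt_gaussianReward hv μ a c).deriv]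
  exact mul_neg_of_pos_of_neg (gpdf_pos (by positivity) _ _)
    (div_neg_of_neg_of_pos (by linarith) (by positivity))

lemma gaussianReward_le {v a : ℝ} (hv : 0 < v) (ha : 0 < a) (μ c : ℝ) :
    gaussianReward μ v a c ≤ gaussianReward μ v a (μ / (a * v)) := by
  rcases le_total c (μ / (a * v)) with hc | hc
  · exact (strictMonoOn_gaussianReward hv ha μ).monotoneOn hc self_mem_Iic hc
  · exact (strictAntiOn_gaussianReward hv ha μ).antitoneOn self_mem_Ici hc hc

theorem stmt_17 (σ σ0 τ0 : ℝ) (hσ : 0 < σ) (hσ0 : 0 < σ0) (hτ0 : 0 < τ0)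
    (N : ℕ) (hN : 0 < N)
    (R : ℝ → ℝ → ℝ)
    (hR : R = fun z β => ∫ τ : ℝ, gpdf τ0 (σ0 ^ 2) τ *
      (τ * Phi ((N * τ + τ0 * β) / (2 * Real.sqrt N * σ) - z)))
    (βbayes : ℝ) (hβbayes : βbayes = 4 * σ ^ 2 / σ0 ^ 2) :
    StrictMonoOn (R 0) (Set.Ico 0 βbayes) ∧
      StrictAntiOn (R 0) (Set.Ioi βbayes) ∧
      (∀ β : ℝ, 0 ≤ β → R 0 β ≤ R 0 βbayes) ∧
      (∀ z βmax : ℝ, 0 < z → 0 ≤ βmax →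
        (∀ β : ℝ, 0 ≤ β → R z β ≤ R z βmax) → βbayes < βmax) := by
  have hN' : (0 : ℝ) < N := Nat.cast_pos.2 hN
  set a := (N : ℝ) / (2 * √N * σ)
  set b := τ0 / (2 * √N * σ)
  set F := gaussianReward τ0 (σ0 ^ 2) a
  have ha : 0 < a := by positivity
  have hb : 0 < b := by positivity
  have hRF : ∀ z β, R z β = F (b * β - z) := by
    intro z β
    simp only [hR, F, gaussianReward, a, b]
    congr 1 with τ
    congr 3
    field_simp
    ring
  have hR0 : R 0 = fun β => F (b * β) := funext fun β => by rw [hRF, sub_zero]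
  have hpeak : b * βbayes = τ0 / (a * σ0 ^ 2) := by
    simp only [hβbayes, a, b]
    field_simp
    rw [sq_sqrt hN'.le]
    ring
  have hmono := strictMonoOn_gaussianReward (pow_pos hσ0 2) ha τ0
  have hanti := strictAntiOn_gaussianReward (pow_pos hσ0 2) ha τ0
  have hscale : StrictMono (b * ·) := strictMono_mul_left_of_pos hb
  refine ⟨?_, ?_, ?_, ?_⟩
  · rw [hR0]
    refine hmono.comp (hscale.strictMonoOn _) fun β hβ => ?_
    rw [mem_Iic, ← hpeak]
    exact (hscale hβ.2).le
  · rw [hR0]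
    refine hanti.comp_strictMonoOn (hscale.strictMonoOn _) fun β hβ => ?_
    rw [mem_Ici, ← hpeak]
    exact (hscale hβ).le
  · intro β _
    rw [hR0]
    exact (gaussianReward_le (pow_pos hσ0 2) ha τ0 _).trans_eq (congrArg F hpeak.symm)
  · intro z βmax hz hβmax hopt
    by_contra! hle
    have hpeak_val := hopt (βbayes + z / b) (by linarith [div_pos hz hb])
    rw [hRF, hRF, mul_add, mul_div_cancel₀ _ hb.ne', add_sub_cancel_right, hpeak] at hpeak_val
    have hlt : b * βmax - z < τ0 / (a * σ0 ^ 2) := by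
      rw [← hpeak]; nlinarith
    exact (hmono hlt.le self_mem_Iic hlt).not_ge hpeak_val
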